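/- Let Γ be a finitely generated group and γ_1, γ_2 ∈ Γ. Then the following are equivalent: (i) for every finite group G, writing K = K_Γ(G), there is an automorphism of Γ/K mapping γ_1K to γ_2K; (ii) for every finite-index normal subgroup N ◁ Γ there exists a finite-index normal subgroup K ◁ Γ with K ≤ N such that there is an automorphism of Γ/K mapping γ_1K to γ_2K. -/

import Mathlib

/-- `Kgrp Γ G` is the intersection of all normal subgroups `N ◁ Γ` with `Γ/N ≅ G`
(equivalently, of the kernels of all surjective homomorphisms `Γ →* G`); it equals
`Γ` if `G` is not a quotient of `Γ`. -/
def Kgrp (Γ : Type) [Group Γ] (G : Type) [Group G] : Subgroup Γ :=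
  ⨅ (φ : Γ →* G) (_ : Function.Surjective φ), φ.ker

instance Kgrp_normal (Γ : Type) [Group Γ] (G : Type) [Group G] : (Kgrp Γ G).Normal := by
  constructor
  intro n hn g
  simp only [Kgrp, Subgroup.mem_iInf] at hn ⊢
  intro φ hφ
  have h1 := hn φ hφ
  simp only [MonoidHom.mem_ker] at h1 ⊢
  simp [map_mul, h1]

/-- There is an automorphism of `Γ ⧸ K` mapping `a K` to `b K`. -/
def AutEquivInQuotient {Γ : Type} [Group Γ] (K : Subgroup Γ) [K.Normal] (a b : Γ) : Prop :=
  ∃ θ : MulAut (Γ ⧸ K), θ (QuotientGroup.mk a) = QuotientGroup.mk b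

/-!
If `K' ≤ K := K_Γ(G)` is normal, then `K` is the preimage of `K_{Γ/K'}(G)`, since every
surjection `Γ → G` kills `K'` and so factors through `Γ/K'`. Hence `K/K'` is characteristic in
`Γ/K'`, and every automorphism of `Γ/K'` descends to `Γ/K ≅ (Γ/K')/(K/K')`. This gives
(ii) ⇒ (i) with `N = K`, which has finite index because a finitely generated group has only
finitely many homomorphisms to a finite group. Conversely, `K_Γ(Γ/N) ≤ N` gives (i) ⇒ (ii).
-/

open QuotientGroup

section Kgrp

variable {Γ : Type} [Group Γ] {G : Type} [Group G]

theorem mem_Kgrp {x : Γ} :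
    x ∈ Kgrp Γ G ↔ ∀ φ : Γ →* G, Function.Surjective φ → φ x = 1 := by
  simp [Kgrp, Subgroup.mem_iInf, MonoidHom.mem_ker]

theorem Kgrp_le_ker {φ : Γ →* G} (hφ : Function.Surjective φ) : Kgrp Γ G ≤ φ.ker :=
  fun _ hx => mem_Kgrp.mp hx φ hφ

theorem comap_Kgrp_of_surjective {Δ : Type} [Group Δ] {f : Γ →* Δ}
    (hf : Function.Surjective f) (hker : f.ker ≤ Kgrp Γ G) :
    (Kgrp Δ G).comap f = Kgrp Γ G := by
  ext x
  simp only [Subgroup.mem_comap, mem_Kgrp]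
  refine ⟨fun hx φ hφ => ?_, fun hx ψ hψ => hx (ψ.comp f) (hψ.comp hf)⟩
  set ψ := f.liftOfSurjective hf ⟨φ, hker.trans (Kgrp_le_ker hφ)⟩
  have hψf : ∀ y, ψ (f y) = φ y := MonoidHom.liftOfRightInverse_comp_apply _ _ _ _
  have hψ : Function.Surjective ψ := fun z =>
    let ⟨y, hy⟩ := hφ z
    ⟨f y, (hψf y).trans hy⟩
  rw [← hψf]
  exact hx ψ hψ

instance Kgrp_characteristic : (Kgrp Γ G).Characteristic :=
  ⟨fun e => comap_Kgrp_of_surjective e.surjective <| by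
    rw [MonoidHom.ker_eq_bot _ e.injective]; exact bot_le⟩

theorem map_mk'_Kgrp {K : Subgroup Γ} [K.Normal] (hK : K ≤ Kgrp Γ G) :
    (Kgrp Γ G).map (mk' K) = Kgrp (Γ ⧸ K) G := by
  rw [← comap_Kgrp_of_surjective (mk'_surjective K) (by rwa [ker_mk']),
    Subgroup.map_comap_eq_self_of_surjective (mk'_surjective K)]

theorem Kgrp_quotient_le (N : Subgroup Γ) [N.Normal] : Kgrp Γ (Γ ⧸ N) ≤ N := by
  simpa using Kgrp_le_ker (mk'_surjective N)

theorem finite_monoidHom_of_fg [Group.FG Γ] [Finite G] : Finite (Γ →* G) := by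
  obtain ⟨S, hS, hSfin⟩ := Group.fg_iff.mp ‹Group.FG Γ›
  have : Finite S := hSfin
  refine Finite.of_injective (fun (φ : Γ →* G) (s : S) => φ s) fun φ ψ h => ?_
  exact MonoidHom.eq_of_eqOn_dense hS fun x hx => congrFun h ⟨x, hx⟩

instance Kgrp_finiteIndex [Group.FG Γ] [Finite G] : (Kgrp Γ G).FiniteIndex := by
  have : Finite (Γ →* G) := finite_monoidHom_of_fg
  have : (⨅ φ : Γ →* G, φ.ker).FiniteIndex :=
    Subgroup.finiteIndex_iInf fun φ => Subgroup.finiteIndex_ker φ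
  exact Subgroup.finiteIndex_of_le fun x hx => mem_Kgrp.mpr fun φ _ =>
    MonoidHom.mem_ker.mp (Subgroup.mem_iInf.mp hx φ)

end Kgrp

theorem AutEquivInQuotient.of_le_of_characteristic {Γ : Type} [Group Γ]
    {N M : Subgroup Γ} [N.Normal] [M.Normal] (hNM : N ≤ M)
    [hM : (M.map (mk' N)).Characteristic] {a b : Γ} (h : AutEquivInQuotient N a b) :
    AutEquivInQuotient M a b := by
  obtain ⟨θ, hθ⟩ := h
  let e := quotientQuotientEquivQuotient N M hNM
  let θ' := congr (M.map (mk' N)) (M.map (mk' N)) θ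
    (Subgroup.characteristic_iff_map_eq.mp hM θ)
  refine ⟨e.symm.trans (θ'.trans e), ?_⟩
  have he : ∀ x : Γ, e.symm (x : Γ ⧸ M) = ((x : Γ ⧸ N) : (Γ ⧸ N) ⧸ M.map (mk' N)) :=
    fun x => e.symm_apply_eq.mpr (quotientQuotientEquivQuotientAux_mk_mk N M hNM x).symm
  calc e (θ' (e.symm a)) = e (θ (a : Γ ⧸ N) : (Γ ⧸ N) ⧸ M.map (mk' N)) := by rw [he]; rfl
    _ = b := by rw [hθ]; exact quotientQuotientEquivQuotientAux_mk_mk N M hNM b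

/-- Let `Γ` be a finitely generated group and `γ₁, γ₂ ∈ Γ`.  The following are
equivalent: (i) for every finite group `G`, with `K = K_Γ(G)`, there is an
automorphism of `Γ/K` mapping `γ₁ K` to `γ₂ K`; (ii) for every finite-index normal
subgroup `N ◁ Γ` there is a finite-index normal subgroup `K ◁ Γ` with `K ≤ N` such
that some automorphism of `Γ/K` maps `γ₁ K` to `γ₂ K`. -/
theorem autEquiv_in_char_quotients_iff_in_deep_quotients
    (Γ : Type) [Group Γ] [Group.FG Γ] (γ₁ γ₂ : Γ) :
    (∀ (G : Type) [Group G] [Finite G], AutEquivInQuotient (Kgrp Γ G) γ₁ γ₂) ↔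
    (∀ N : Subgroup Γ, N.Normal → N.index ≠ 0 →
      ∃ (K : Subgroup Γ) (hK : K.Normal), K.index ≠ 0 ∧ K ≤ N ∧
        @AutEquivInQuotient Γ _ K hK γ₁ γ₂) := by
  constructor
  · intro hchar N hN hNindex
    have : N.FiniteIndex := ⟨hNindex⟩
    exact ⟨Kgrp Γ (Γ ⧸ N), inferInstance, Subgroup.FiniteIndex.index_ne_zero,
      Kgrp_quotient_le N, hchar (Γ ⧸ N)⟩
  · intro hdeep G _ _
    obtain ⟨K, hK, -, hKle, hKaut⟩ :=
      hdeep (Kgrp Γ G) inferInstance Subgroup.FiniteIndex.index_ne_zero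
    have : (Kgrp Γ G).map (mk' K) |>.Characteristic := by
      rw [map_mk'_Kgrp hKle]; infer_instance
    exact hKaut.of_le_of_characteristic hKle
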